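/- Let θ ∈ (0,1) and let u* be a smooth function on a planar domain with u*_{ξξ} > 0 and u*_{ηη} < 0. The Euler–Lagrange equation of the functional A*(u*) = ∫ (−u*_{ηη})^θ (u*_{ξξ})^{1−θ} dξ dη is −θ((w*)^{θ−1})_{ηη} + (1−θ)((w*)^θ)_{ξξ} = 0 where w* = −u*_{ηη}/u*_{ξξ}, and expanding derivatives this is equivalent to w* w*_{ξξ} + w*_{ηη} + (θ−1)(w*_ξ)² + ((θ−2)/w*)(w*_η)² = 0. -/

import Mathlib

/-- First partial derivative in the first variable (ξ). -/
noncomputable def p1 (f : ℝ × ℝ → ℝ) (z : ℝ × ℝ) : ℝ := deriv (fun t => f (t, z.2)) z.1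

/-- First partial derivative in the second variable (η). -/
noncomputable def p2 (f : ℝ × ℝ → ℝ) (z : ℝ × ℝ) : ℝ := deriv (fun t => f (z.1, t)) z.2

section helpers

lemma slice2' {f : ℝ × ℝ → ℝ} {U : Set (ℝ × ℝ)} (hU : IsOpen U)
    (hf : ContDiffOn ℝ (⊤ : ℕ∞) f U) {z : ℝ × ℝ} (hz : z ∈ U) :
    HasDerivAt (fun t => f (z.1, t)) (fderiv ℝ f z ((0:ℝ), (1:ℝ))) z.2 := by
  have hd : DifferentiableAt ℝ f z :=
    (hf.contDiffAt (hU.mem_nhds hz)).differentiableAt (by simp)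
  have h1 : HasDerivAt (fun t : ℝ => ((z.1, t) : ℝ × ℝ)) ((0:ℝ), (1:ℝ)) z.2 :=
    HasDerivAt.prodMk (hasDerivAt_const z.2 z.1) (hasDerivAt_id z.2)
  have := hd.hasFDerivAt.comp_hasDerivAt z.2 (by simpa using h1)
  exact this

lemma slice2 {f : ℝ × ℝ → ℝ} {U : Set (ℝ × ℝ)} (hU : IsOpen U)
    (hf : ContDiffOn ℝ (⊤ : ℕ∞) f U) {z : ℝ × ℝ} (hz : z ∈ U) :
    HasDerivAt (fun t => f (z.1, t)) (p2 f z) z.2 := by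
  have h := slice2' hU hf hz
  have h2 : p2 f z = fderiv ℝ f z ((0:ℝ),(1:ℝ)) := h.deriv
  rw [h2]; exact h

lemma slice1' {f : ℝ × ℝ → ℝ} {U : Set (ℝ × ℝ)} (hU : IsOpen U)
    (hf : ContDiffOn ℝ (⊤ : ℕ∞) f U) {z : ℝ × ℝ} (hz : z ∈ U) :
    HasDerivAt (fun t => f (t, z.2)) (fderiv ℝ f z ((1:ℝ), (0:ℝ))) z.1 := by
  have hd : DifferentiableAt ℝ f z :=
    (hf.contDiffAt (hU.mem_nhds hz)).differentiableAt (by simp)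
  have h1 : HasDerivAt (fun t : ℝ => ((t, z.2) : ℝ × ℝ)) ((1:ℝ), (0:ℝ)) z.1 :=
    HasDerivAt.prodMk (hasDerivAt_id z.1) (hasDerivAt_const z.1 z.2)
  have := hd.hasFDerivAt.comp_hasDerivAt z.1 (by simpa using h1)
  exact this

lemma slice1 {f : ℝ × ℝ → ℝ} {U : Set (ℝ × ℝ)} (hU : IsOpen U)
    (hf : ContDiffOn ℝ (⊤ : ℕ∞) f U) {z : ℝ × ℝ} (hz : z ∈ U) :
    HasDerivAt (fun t => f (t, z.2)) (p1 f z) z.1 := by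
  have h := slice1' hU hf hz
  have h2 : p1 f z = fderiv ℝ f z ((1:ℝ),(0:ℝ)) := h.deriv
  rw [h2]; exact h

lemma ev2 {z : ℝ × ℝ} {U : Set (ℝ × ℝ)} (hU : IsOpen U) (hz : z ∈ U) :
    ∀ᶠ t in nhds z.2, ((z.1, t) : ℝ × ℝ) ∈ U := by
  have htend : Filter.Tendsto (fun t : ℝ => ((z.1, t) : ℝ × ℝ)) (nhds z.2) (nhds z) := by
    simpa using (Continuous.tendsto (by continuity) z.2)
  exact htend.eventually (hU.mem_nhds hz : ∀ᶠ y in nhds z, y ∈ U)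

lemma ev1 {z : ℝ × ℝ} {U : Set (ℝ × ℝ)} (hU : IsOpen U) (hz : z ∈ U) :
    ∀ᶠ t in nhds z.1, ((t, z.2) : ℝ × ℝ) ∈ U := by
  have htend : Filter.Tendsto (fun t : ℝ => ((t, z.2) : ℝ × ℝ)) (nhds z.1) (nhds z) := by
    simpa using (Continuous.tendsto (by continuity) z.1)
  exact htend.eventually (hU.mem_nhds hz : ∀ᶠ y in nhds z, y ∈ U)

/-- Second partial derivative in η as a `HasDerivAt` statement. -/
lemma d22 {f : ℝ × ℝ → ℝ} {U : Set (ℝ × ℝ)} (hU : IsOpen U)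
    (hf : ContDiffOn ℝ (⊤ : ℕ∞) f U) {z : ℝ × ℝ} (hz : z ∈ U) :
    HasDerivAt (fun t => p2 f (z.1, t)) (p2 (p2 f) z) z.2 := by
  set F : ℝ × ℝ → ℝ := fun y => fderiv ℝ f y ((0:ℝ),(1:ℝ)) with hF
  have hFsm : ContDiffOn ℝ (⊤ : ℕ∞) F U :=
    (hf.fderiv_of_isOpen hU (by simp)).clm_apply contDiffOn_const
  have hFs : HasDerivAt (fun t => F (z.1, t)) (p2 F z) z.2 := slice2 hU hFsm hz
  have heq : ∀ᶠ t in nhds z.2, p2 f (z.1, t) = F (z.1, t) := by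
    filter_upwards [ev2 hU hz] with t ht
    exact (slice2' hU hf ht).deriv
  have h2 : HasDerivAt (fun t => p2 f (z.1, t)) (p2 F z) z.2 :=
    hFs.congr_of_eventuallyEq heq
  have h3 : p2 (p2 f) z = p2 F z := h2.deriv
  rw [h3]; exact h2

/-- Second partial derivative in ξ as a `HasDerivAt` statement. -/
lemma d11 {f : ℝ × ℝ → ℝ} {U : Set (ℝ × ℝ)} (hU : IsOpen U)
    (hf : ContDiffOn ℝ (⊤ : ℕ∞) f U) {z : ℝ × ℝ} (hz : z ∈ U) :
    HasDerivAt (fun t => p1 f (t, z.2)) (p1 (p1 f) z) z.1 := by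
  set G : ℝ × ℝ → ℝ := fun y => fderiv ℝ f y ((1:ℝ),(0:ℝ)) with hG
  have hGsm : ContDiffOn ℝ (⊤ : ℕ∞) G U :=
    (hf.fderiv_of_isOpen hU (by simp)).clm_apply contDiffOn_const
  have hGs : HasDerivAt (fun t => G (t, z.2)) (p1 G z) z.1 := slice1 hU hGsm hz
  have heq : ∀ᶠ t in nhds z.1, p1 f (t, z.2) = G (t, z.2) := by
    filter_upwards [ev1 hU hz] with t ht
    exact (slice1' hU hf ht).deriv
  have h2 : HasDerivAt (fun t => p1 f (t, z.2)) (p1 G z) z.1 :=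
    hGs.congr_of_eventuallyEq heq
  have h3 : p1 (p1 f) z = p1 G z := h2.deriv
  rw [h3]; exact h2

/-- `p1`/`p2` of a globally smooth function are globally smooth. -/
lemma contDiff_p1 {f : ℝ × ℝ → ℝ} (hf : ContDiff ℝ (⊤ : ℕ∞) f) : ContDiff ℝ (⊤ : ℕ∞) (p1 f) := by
  have h : p1 f = fun y => fderiv ℝ f y ((1:ℝ),(0:ℝ)) := by
    funext y
    exact (slice1' isOpen_univ hf.contDiffOn (Set.mem_univ y)).deriv
  rw [h]
  exact (hf.fderiv_right (by simp)).clm_apply contDiff_const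

lemma contDiff_p2 {f : ℝ × ℝ → ℝ} (hf : ContDiff ℝ (⊤ : ℕ∞) f) : ContDiff ℝ (⊤ : ℕ∞) (p2 f) := by
  have h : p2 f = fun y => fderiv ℝ f y ((0:ℝ),(1:ℝ)) := by
    funext y
    exact (slice2' isOpen_univ hf.contDiffOn (Set.mem_univ y)).deriv
  rw [h]
  exact (hf.fderiv_right (by simp)).clm_apply contDiff_const

end helpers

/-- For `θ ∈ (0,1)` and `w* = -u*_{ηη}/u*_{ξξ} > 0`, the Euler–Lagrange equation
`−θ((w*)^{θ−1})_{ηη} + (1−θ)((w*)^θ)_{ξξ} = 0` of the functional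
`∫ (−u*_{ηη})^θ (u*_{ξξ})^{1−θ}` is equivalent to
`w* w*_{ξξ} + w*_{ηη} + (θ−1)(w*_ξ)² + ((θ−2)/w*)(w*_η)² = 0`. -/
theorem stmt12 (θ : ℝ) (hθ : θ ∈ Set.Ioo (0 : ℝ) 1)
    (D : Set (ℝ × ℝ)) (hD : IsOpen D)
    (ustar : ℝ × ℝ → ℝ) (hsm : ContDiff ℝ (⊤ : ℕ∞) ustar)
    (hξξ : ∀ z ∈ D, 0 < p1 (p1 ustar) z)
    (hηη : ∀ z ∈ D, p2 (p2 ustar) z < 0)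
    (wstar : ℝ × ℝ → ℝ)
    (hw : ∀ z, wstar z = -(p2 (p2 ustar) z) / p1 (p1 ustar) z) :
    ∀ z ∈ D,
      (-θ * p2 (p2 (fun y => wstar y ^ (θ - 1))) z
          + (1 - θ) * p1 (p1 (fun y => wstar y ^ θ)) z = 0
        ↔ wstar z * p1 (p1 wstar) z + p2 (p2 wstar) z + (θ - 1) * (p1 wstar z) ^ 2
            + ((θ - 2) / wstar z) * (p2 wstar z) ^ 2 = 0) := by
  intro z hzD
  obtain ⟨hθ0, hθ1⟩ := hθ
  -- smooth second derivatives of ustar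
  have ha : ContDiff ℝ (⊤ : ℕ∞) (p1 (p1 ustar)) := contDiff_p1 (contDiff_p1 hsm)
  have hb : ContDiff ℝ (⊤ : ℕ∞) (p2 (p2 ustar)) := contDiff_p2 (contDiff_p2 hsm)
  -- the open set where wstar is positive and smooth
  set U : Set (ℝ × ℝ) := {y | 0 < p1 (p1 ustar) y ∧ p2 (p2 ustar) y < 0} with hUdef
  have hU : IsOpen U := by
    have h1 : IsOpen {y : ℝ × ℝ | 0 < p1 (p1 ustar) y} :=
      isOpen_lt continuous_const ha.continuous
    have h2 : IsOpen {y : ℝ × ℝ | p2 (p2 ustar) y < 0} :=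
      isOpen_lt hb.continuous continuous_const
    exact h1.inter h2
  have hzU : z ∈ U := ⟨hξξ z hzD, hηη z hzD⟩
  have hwU : ContDiffOn ℝ (⊤ : ℕ∞) wstar U := by
    refine ContDiffOn.congr (f := fun y => -(p2 (p2 ustar) y) / p1 (p1 ustar) y)
      ?_ (fun y _ => hw y)
    exact (hb.neg.contDiffOn).div (ha.contDiffOn) (fun y hy => ne_of_gt hy.1)
  have hWposU : ∀ y ∈ U, 0 < wstar y := by
    intro y hy
    rw [hw y]
    exact div_pos (neg_pos.2 hy.2) hy.1
  have hWpos : 0 < wstar z := hWposU z hzU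
  have hWne : wstar z ≠ 0 := hWpos.ne'
  -- basic derivative facts
  have hg : HasDerivAt (fun t => wstar (z.1, t)) (p2 wstar z) z.2 := slice2 hU hwU hzU
  have hgx : HasDerivAt (fun t => wstar (t, z.2)) (p1 wstar z) z.1 := slice1 hU hwU hzU
  have hh2 : HasDerivAt (fun t => p2 wstar (z.1, t)) (p2 (p2 wstar) z) z.2 := d22 hU hwU hzU
  have hh1 : HasDerivAt (fun t => p1 wstar (t, z.2)) (p1 (p1 wstar) z) z.1 := d11 hU hwU hzU
  set W := wstar z with hWdef
  set P := p1 wstar z with hPdef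
  set Q := p2 wstar z with hQdef
  set R := p1 (p1 wstar) z with hRdef
  set S := p2 (p2 wstar) z with hSdef
  -- first derivative of wstar ^ c on U (η-direction)
  have firstder2 : ∀ c : ℝ, ∀ y ∈ U,
      p2 (fun y => wstar y ^ c) y = p2 wstar y * c * wstar y ^ (c - 1) := by
    intro c y hy
    have hgy : HasDerivAt (fun t => wstar (y.1, t)) (p2 wstar y) y.2 := slice2 hU hwU hy
    have := hgy.rpow_const (p := c) (Or.inl (by simpa using (hWposU y hy).ne'))
    exact this.deriv
  have firstder1 : ∀ c : ℝ, ∀ y ∈ U,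
      p1 (fun y => wstar y ^ c) y = p1 wstar y * c * wstar y ^ (c - 1) := by
    intro c y hy
    have hgy : HasDerivAt (fun t => wstar (t, y.2)) (p1 wstar y) y.1 := slice1 hU hwU hy
    have := hgy.rpow_const (p := c) (Or.inl (by simpa using (hWposU y hy).ne'))
    exact this.deriv
  -- second derivative in η of wstar ^ (θ - 1)
  have hA : p2 (p2 (fun y => wstar y ^ (θ - 1))) z
      = (S * (θ - 1)) * W ^ (θ - 1 - 1)
        + (Q * (θ - 1)) * (Q * (θ - 1 - 1) * W ^ (θ - 1 - 1 - 1)) := by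
    have hpow : HasDerivAt (fun t => wstar (z.1, t) ^ (θ - 1 - 1))
        (Q * (θ - 1 - 1) * wstar (z.1, z.2) ^ (θ - 1 - 1 - 1)) z.2 :=
      hg.rpow_const (Or.inl (by simpa using hWne))
    have hprod : HasDerivAt
        (fun t => (p2 wstar (z.1, t) * (θ - 1)) * wstar (z.1, t) ^ (θ - 1 - 1))
        ((S * (θ - 1)) * wstar (z.1, z.2) ^ (θ - 1 - 1)
          + (p2 wstar (z.1, z.2) * (θ - 1)) * (Q * (θ - 1 - 1) * wstar (z.1, z.2) ^ (θ - 1 - 1 - 1)))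
        z.2 := (hh2.mul_const (θ - 1)).mul hpow
    have heq : ∀ᶠ t in nhds z.2,
        p2 (fun y => wstar y ^ (θ - 1)) (z.1, t)
          = (p2 wstar (z.1, t) * (θ - 1)) * wstar (z.1, t) ^ (θ - 1 - 1) := by
      filter_upwards [ev2 hU hzU] with t ht
      exact firstder2 (θ - 1) (z.1, t) ht
    have hfinal : HasDerivAt (fun t => p2 (fun y => wstar y ^ (θ - 1)) (z.1, t))
        ((S * (θ - 1)) * wstar (z.1, z.2) ^ (θ - 1 - 1)
          + (p2 wstar (z.1, z.2) * (θ - 1)) * (Q * (θ - 1 - 1) * wstar (z.1, z.2) ^ (θ - 1 - 1 - 1)))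
        z.2 := hprod.congr_of_eventuallyEq heq
    have := hfinal.deriv
    exact this
  -- second derivative in ξ of wstar ^ θ
  have hB : p1 (p1 (fun y => wstar y ^ θ)) z
      = (R * θ) * W ^ (θ - 1) + (P * θ) * (P * (θ - 1) * W ^ (θ - 1 - 1)) := by
    have hpow : HasDerivAt (fun t => wstar (t, z.2) ^ (θ - 1))
        (P * (θ - 1) * wstar (z.1, z.2) ^ (θ - 1 - 1)) z.1 :=
      hgx.rpow_const (Or.inl (by simpa using hWne))
    have hprod : HasDerivAt
        (fun t => (p1 wstar (t, z.2) * θ) * wstar (t, z.2) ^ (θ - 1))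
        ((R * θ) * wstar (z.1, z.2) ^ (θ - 1)
          + (p1 wstar (z.1, z.2) * θ) * (P * (θ - 1) * wstar (z.1, z.2) ^ (θ - 1 - 1)))
        z.1 := (hh1.mul_const θ).mul hpow
    have heq : ∀ᶠ t in nhds z.1,
        p1 (fun y => wstar y ^ θ) (t, z.2)
          = (p1 wstar (t, z.2) * θ) * wstar (t, z.2) ^ (θ - 1) := by
      filter_upwards [ev1 hU hzU] with t ht
      exact firstder1 θ (t, z.2) ht
    have hfinal : HasDerivAt (fun t => p1 (fun y => wstar y ^ θ) (t, z.2))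
        ((R * θ) * wstar (z.1, z.2) ^ (θ - 1)
          + (p1 wstar (z.1, z.2) * θ) * (P * (θ - 1) * wstar (z.1, z.2) ^ (θ - 1 - 1)))
        z.1 := hprod.congr_of_eventuallyEq heq
    have := hfinal.deriv
    exact this
  -- algebra
  have e3 : (0:ℝ) < W ^ (θ - 3) := Real.rpow_pos_of_pos hWpos _
  have e1 : W ^ (θ - 1 - 1 - 1) = W ^ (θ - 3) := by
    rw [show θ - 1 - 1 - 1 = θ - 3 by ring]
  have e2 : W ^ (θ - 1 - 1) = W ^ (θ - 3) * W := by
    rw [show θ - 1 - 1 = θ - 3 + 1 by ring, Real.rpow_add_one hWne]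
  have e4 : W ^ (θ - 1) = W ^ (θ - 3) * W * W := by
    rw [show θ - 1 = θ - 3 + 1 + 1 by ring, Real.rpow_add_one hWne, Real.rpow_add_one hWne]
  rw [hA, hB, e1, e2, e4]
  set t := W ^ (θ - 3) with htdef
  have hKpos : 0 < θ * (1 - θ) * t * W :=
    mul_pos (mul_pos (mul_pos hθ0 (by linarith)) e3) hWpos
  have key : -θ * ((S * (θ - 1)) * (t * W)
        + (Q * (θ - 1)) * (Q * (θ - 1 - 1) * t))
      + (1 - θ) * ((R * θ) * (t * W * W) + (P * θ) * (P * (θ - 1) * (t * W)))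
      = (θ * (1 - θ) * t * W)
        * (W * R + S + (θ - 1) * P ^ 2 + ((θ - 2) / W) * Q ^ 2) := by
    field_simp
    ring
  rw [key]
  constructor
  · intro h
    rcases mul_eq_zero.mp h with h' | h'
    · exact absurd h' hKpos.ne'
    · exact h'
  · intro h
    rw [h, mul_zero]
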